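/- arXiv:1911.11992 — 2 statements merged into one kernel-verified Lean document; each statement's English description precedes it below -/
import Mathlib

section
/- Let u satisfy the standing assumptions. Let E ⊆ ℝ^d be any subset and f : E → ℝ^d a map, and suppose there exists M > 0 such that the composition operator C_f is everywhere defined with bound M (with S = E). Then f is continuous on E. -/
/-!
Every translate `u (· - y)` is `h_g` for `g = û e^{-2πi y·ξ}`, which lies in `L²(û⁻¹)`. So on `E`
the function `x ↦ u (f x - y)` agrees with `h_{g'}` for some `g' ∈ L²(û⁻¹) ⊆ L¹`, which is
continuous; hence `u (f x - y) → u (f x₀ - y)` for every `y` as `x → x₀` in `E`. Now `u` is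
continuous, vanishes at infinity (Riemann–Lebesgue) and `u 0 = ∫ û ≠ 0`. Taking `y = f x₀`,
`f x - f x₀` eventually stays in a compact set, and every cluster point `c` of it satisfies
`u (c + z) = u z` for all `z`; a period `c ≠ 0` would force `u = 0`, so `f x → f x₀`.
-/

open MeasureTheory Filter
open scoped Real ComplexOrder

noncomputable section

namespace Paper

/-- The character `e^{2π i x·ξ}` for `x, ξ ∈ ℝ^d`. -/
def char {d : ℕ} (x ξ : EuclideanSpace ℝ (Fin d)) : ℂ :=
  Complex.exp (2 * Real.pi * Complex.I * ((∑ j, x j * ξ j : ℝ) : ℂ))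

/-- Membership in `L²(û⁻¹)`: measurable, vanishing a.e. on `{û = 0}`, with
`∫ |g|² û⁻¹ < ∞`. -/
def MemL2inv {d : ℕ} (uhat : EuclideanSpace ℝ (Fin d) → ℝ)
    (g : EuclideanSpace ℝ (Fin d) → ℂ) : Prop :=
  Measurable g ∧ (∀ᵐ ξ ∂volume, uhat ξ = 0 → g ξ = 0) ∧
    Integrable (fun ξ => ‖g ξ‖ ^ 2 * (uhat ξ)⁻¹)

/-- The norm `‖g‖_{L²(û⁻¹)}`. -/
def nrmInv {d : ℕ} (uhat : EuclideanSpace ℝ (Fin d) → ℝ)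
    (g : EuclideanSpace ℝ (Fin d) → ℂ) : ℝ :=
  Real.sqrt (∫ ξ, ‖g ξ‖ ^ 2 * (uhat ξ)⁻¹)

/-- `h_g(x) = ∫ g(ξ) e^{2πi x·ξ} dξ`. -/
def hFun {d : ℕ} (g : EuclideanSpace ℝ (Fin d) → ℂ) (x : EuclideanSpace ℝ (Fin d)) : ℂ :=
  ∫ ξ, g ξ * char x ξ

/-- The composition operator `C_f` (for the RKHS associated with `û`) is everywhere
defined with bound `M`, on the set `S`. -/
def BddCompOp {d : ℕ} (uhat : EuclideanSpace ℝ (Fin d) → ℝ)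
    (S : Set (EuclideanSpace ℝ (Fin d)))
    (f : EuclideanSpace ℝ (Fin d) → EuclideanSpace ℝ (Fin d)) (M : ℝ) : Prop :=
  ∀ g, MemL2inv uhat g → ∃ g', MemL2inv uhat g' ∧ (∀ x ∈ S, hFun g' x = hFun g (f x)) ∧
    nrmInv uhat g' ≤ M * nrmInv uhat g

/-- Matrix acting on Euclidean space. -/
def mulVecE {d : ℕ} (A : Matrix (Fin d) (Fin d) ℝ) (x : EuclideanSpace ℝ (Fin d)) :
    EuclideanSpace ℝ (Fin d) :=
  (EuclideanSpace.equiv (Fin d) ℝ).symm (A.mulVec (EuclideanSpace.equiv (Fin d) ℝ x))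

/-- Membership in `G(u)`: invertible `A` with `û(Aᵀ ξ) ≥ λ û(ξ)` a.e. for some `λ > 0`. -/
def memG {d : ℕ} (uhat : EuclideanSpace ℝ (Fin d) → ℝ) (A : Matrix (Fin d) (Fin d) ℝ) : Prop :=
  IsUnit A ∧ ∃ lam > (0:ℝ), ∀ᵐ ξ ∂volume, lam * uhat ξ ≤ uhat (mulVecE A.transpose ξ)

/-- Condition (A): `û` decays faster than every exponential. -/
def CondA {d : ℕ} (uhat : EuclideanSpace ℝ (Fin d) → ℝ) : Prop :=
  ∀ a > (0:ℝ), ∃ c > (0:ℝ), ∀ᵐ ξ ∂volume, uhat ξ ≤ c * Real.exp (-a * ‖ξ‖)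

/-- The norm `‖h‖_{L²(û)}`. -/
def nrmHat {d : ℕ} (uhat : EuclideanSpace ℝ (Fin d) → ℝ)
    (h : EuclideanSpace ℝ (Fin d) → ℂ) : ℝ :=
  Real.sqrt (∫ ξ, ‖h ξ‖ ^ 2 * uhat ξ)

/-- Evaluation of a `d`-variable complex polynomial at a real point. -/
def evalP {d : ℕ} (P : MvPolynomial (Fin d) ℂ) (ξ : EuclideanSpace ℝ (Fin d)) : ℂ :=
  MvPolynomial.eval (fun j => ((ξ j : ℝ) : ℂ)) P

/-- `(m_z P)(ξ) = e^{-2πi z·ξ} P(ξ)`. -/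
def mzP {d : ℕ} (z : Fin d → ℂ) (P : MvPolynomial (Fin d) ℂ)
    (ξ : EuclideanSpace ℝ (Fin d)) : ℂ :=
  Complex.exp (-(2 * Real.pi * Complex.I) * ∑ j, z j * ((ξ j : ℝ) : ℂ)) * evalP P ξ

/-- Condition (B): `sup_z limsup_n (sup ratio)^{1/n} < ∞`. -/
def CondB {d : ℕ} (uhat : EuclideanSpace ℝ (Fin d) → ℝ) : Prop :=
  ∃ C : ℝ, ∀ z : Fin d → ℂ,
    Filter.limsup (fun n : ℕ =>
      (sSup {r : ℝ | ∃ P : MvPolynomial (Fin d) ℂ, P ≠ 0 ∧ P.totalDegree ≤ n ∧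
        r = nrmHat uhat (mzP z P) / nrmHat uhat (evalP P)}) ^ ((n : ℝ)⁻¹))
      Filter.atTop ≤ C

/-- The embedding `ℝ^d ⊆ ℂ^d`. -/
def RtoC {d : ℕ} (x : EuclideanSpace ℝ (Fin d)) : EuclideanSpace ℂ (Fin d) :=
  WithLp.toLp 2 (fun j => ((x j : ℝ) : ℂ))

/-- The imaginary part `Im z ∈ ℝ^d` of `z ∈ ℂ^d`. -/
def imVec {d : ℕ} (z : EuclideanSpace ℂ (Fin d)) : EuclideanSpace ℝ (Fin d) :=
  WithLp.toLp 2 (fun j => (z j).im)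

end Paper

open scoped FourierTransform RealInnerProductSpace Topology

section PeriodicTranslates

variable {V F : Type*} [NormedAddCommGroup V] [NormedSpace ℝ V] [ProperSpace V]
  [NormedAddCommGroup F] {u : V → F}

lemma tendsto_add_nsmul_cocompact {c : V} (hc : c ≠ 0) (z : V) :
    Tendsto (fun n : ℕ => z + n • c) atTop (cocompact V) := by
  rw [← Metric.cobounded_eq_cocompact, ← tendsto_norm_atTop_iff_cobounded]
  have hle : ∀ n : ℕ, ‖n • c‖ - ‖z‖ ≤ ‖z + n • c‖ := fun n => by
    simpa using norm_sub_le (z + n • c) z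
  refine tendsto_atTop_mono hle (tendsto_atTop_add_const_right _ _ ?_)
  simp_rw [← Nat.cast_smul_eq_nsmul ℝ, norm_smul, Real.norm_natCast]
  exact tendsto_natCast_atTop_atTop.atTop_mul_const (norm_pos_iff.mpr hc)

lemma Function.Periodic.eq_zero_of_tendsto_cocompact {c : V} (hper : Function.Periodic u c)
    (hc : c ≠ 0) (hu : Tendsto u (cocompact V) (𝓝 0)) (z : V) : u z = 0 := by
  refine tendsto_nhds_unique ?_ (hu.comp (tendsto_add_nsmul_cocompact hc z))
  exact tendsto_const_nhds.congr fun n => (hper.nsmul n z).symm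

lemma tendsto_nhds_of_forall_tendsto_comp_sub (hu_cont : Continuous u)
    (hu_decay : Tendsto u (cocompact V) (𝓝 0)) (hu0 : u 0 ≠ 0) {ι : Type*} {l : Filter ι}
    {w : ι → V} {w₀ : V} (h : ∀ y, Tendsto (fun i => u (w i - y)) l (𝓝 (u (w₀ - y)))) :
    Tendsto w l (𝓝 w₀) := by
  have hε : 0 < ‖u 0‖ / 2 := half_pos (norm_pos_iff.mpr hu0)
  obtain ⟨K, hK, hKu⟩ : ∃ K, IsCompact K ∧ ∀ z ∉ K, ‖u z‖ < ‖u 0‖ / 2 :=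
    hasBasis_cocompact.eventually_iff.mp
      (hu_decay.norm.eventually (gt_mem_nhds (by simpa using hε)))
  have hmemK : ∀ᶠ i in l, w i - w₀ ∈ K := by
    have h0 : Tendsto (fun i => ‖u (w i - w₀)‖) l (𝓝 ‖u 0‖) := by
      simpa using (h w₀).norm
    filter_upwards [h0.eventually (lt_mem_nhds (half_lt_self (norm_pos_iff.mpr hu0)))]
      with i hi
    by_contra hiK
    exact (hKu _ hiK).not_gt hi
  rw [← tendsto_sub_nhds_zero_iff]
  refine hK.tendsto_nhds_of_unique_mapClusterPt hmemK fun c _ hc => ?_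
  by_contra hc0
  -- the cluster point `c` is a period of `u`
  refine hu0 (Function.Periodic.eq_zero_of_tendsto_cocompact (c := c) (fun z => ?_) hc0 hu_decay 0)
  have hcl : MapClusterPt (u (c + z)) l (fun i => u (w i - w₀ + z)) :=
    hc.tendsto_comp (f := fun x => u (x + z)) ((hu_cont.comp (continuous_add_const z)).tendsto c)
  have htend : Tendsto (fun i => u (w i - w₀ + z)) l (𝓝 (u z)) := by
    simpa [sub_sub_eq_add_sub, add_sub_right_comm] using h (w₀ - z)
  rw [add_comm]
  exact eq_of_nhds_neBot (hcl.neBot.mono (inf_le_inf_left _ htend))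

end PeriodicTranslates

namespace Paper

section Fourier

variable {d : ℕ}

lemma char_eq_fourierChar (x ξ : EuclideanSpace ℝ (Fin d)) : char x ξ = 𝐞 ⟪ξ, x⟫ := by
  rw [Real.fourierChar_apply, char, PiLp.inner_apply]
  simp only [RCLike.inner_apply, conj_trivial]
  push_cast
  ring_nf

lemma norm_char (x ξ : EuclideanSpace ℝ (Fin d)) : ‖char x ξ‖ = 1 := by
  rw [char_eq_fourierChar, Circle.norm_coe]

lemma char_add (x y ξ : EuclideanSpace ℝ (Fin d)) : char (x + y) ξ = char x ξ * char y ξ := by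
  simp only [char_eq_fourierChar, inner_add_right, AddChar.map_add_eq_mul, Circle.coe_mul]

lemma measurable_char (x : EuclideanSpace ℝ (Fin d)) : Measurable (char x) := by
  simp only [funext (char_eq_fourierChar x ·)]
  fun_prop

lemma hFun_eq_fourier (g : EuclideanSpace ℝ (Fin d) → ℂ) (x : EuclideanSpace ℝ (Fin d)) :
    hFun g x = 𝓕 g (-x) := by
  rw [hFun, Real.fourier_eq]
  congr 1 with ξ
  rw [char_eq_fourierChar, inner_neg_right, neg_neg, Circle.smul_def, smul_eq_mul, mul_comm]

lemma continuous_hFun {g : EuclideanSpace ℝ (Fin d) → ℂ} (hg : Integrable g) :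
    Continuous (hFun g) := by
  simp only [funext (hFun_eq_fourier g)]
  exact (VectorFourier.fourierIntegral_continuous Real.continuous_fourierChar
    continuous_inner hg).comp continuous_neg

lemma tendsto_hFun_cocompact (g : EuclideanSpace ℝ (Fin d) → ℂ) :
    Tendsto (hFun g) (cocompact _) (𝓝 0) := by
  simp only [funext (hFun_eq_fourier g)]
  exact (tendsto_integral_exp_inner_smul_cocompact g).comp
    (Homeomorph.neg (EuclideanSpace ℝ (Fin d))).map_cocompact.le

lemma hFun_mul_char (g : EuclideanSpace ℝ (Fin d) → ℂ) (x y : EuclideanSpace ℝ (Fin d)) :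
    hFun (fun ξ => g ξ * char (-y) ξ) x = hFun g (x - y) := by
  simp only [hFun, sub_eq_add_neg, char_add, mul_assoc, mul_comm (char (-y) _)]

lemma hFun_zero (g : EuclideanSpace ℝ (Fin d) → ℂ) : hFun g 0 = ∫ ξ, g ξ := by
  simp [hFun, char]

lemma hFun_ofReal_zero_ne_zero {uhat : EuclideanSpace ℝ (Fin d) → ℝ} (huhat_L1 : Integrable uhat)
    (huhat_pos : ∀ᵐ ξ ∂volume, 0 ≤ uhat ξ) (hne : hFun (fun ξ => (uhat ξ : ℂ)) ≠ 0) :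
    hFun (fun ξ => (uhat ξ : ℂ)) 0 ≠ 0 := by
  rw [hFun_zero, integral_complex_ofReal, Complex.ofReal_ne_zero]
  intro h0
  have hzero : uhat =ᵐ[volume] 0 := (integral_eq_zero_iff_of_nonneg_ae huhat_pos huhat_L1).mp h0
  refine hne (funext fun x => integral_eq_zero_of_ae ?_)
  filter_upwards [hzero] with ξ hξ
  simp [hξ]

-- AM–GM: `‖g‖ ≤ (‖g‖² û⁻¹ + û) / 2`.
lemma MemL2inv.integrable {uhat : EuclideanSpace ℝ (Fin d) → ℝ}
    {g : EuclideanSpace ℝ (Fin d) → ℂ} (huhat_L1 : Integrable uhat)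
    (huhat_pos : ∀ᵐ ξ ∂volume, 0 ≤ uhat ξ) (hg : MemL2inv uhat g) : Integrable g := by
  obtain ⟨hmeas, hvan, hint⟩ := hg
  refine ((hint.add huhat_L1).div_const 2).mono' hmeas.aestronglyMeasurable ?_
  filter_upwards [huhat_pos, hvan] with ξ h0 hv
  rcases h0.eq_or_lt with h | h
  · simp [hv h.symm, ← h]
  · have hexpand : ‖g ξ‖ ^ 2 * (uhat ξ)⁻¹ + uhat ξ - 2 * ‖g ξ‖ = (‖g ξ‖ - uhat ξ) ^ 2 / uhat ξ := by
      field_simp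
      ring
    have := div_nonneg (sq_nonneg (‖g ξ‖ - uhat ξ)) h.le
    simp only [Pi.add_apply]
    linarith

lemma memL2inv_ofReal_mul_char {uhat : EuclideanSpace ℝ (Fin d) → ℝ} (huhat_meas : Measurable uhat)
    (huhat_L1 : Integrable uhat) (huhat_pos : ∀ᵐ ξ ∂volume, 0 ≤ uhat ξ)
    (y : EuclideanSpace ℝ (Fin d)) : MemL2inv uhat (fun ξ => (uhat ξ : ℂ) * char y ξ) := by
  refine ⟨(Complex.measurable_ofReal.comp huhat_meas).mul (measurable_char y),
    ae_of_all _ fun ξ h0 => by simp [h0], huhat_L1.congr ?_⟩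
  filter_upwards [huhat_pos] with ξ h0
  rw [norm_mul, norm_char, mul_one, Complex.norm_real, Real.norm_of_nonneg h0]
  rcases h0.eq_or_lt with h | h
  · simp [← h]
  · field_simp

end Fourier

theorem statement7_general {d : ℕ}
    (uhat : EuclideanSpace ℝ (Fin d) → ℝ) (u : EuclideanSpace ℝ (Fin d) → ℂ)
    (huhat_meas : Measurable uhat) (huhat_L1 : Integrable uhat)
    (huhat_pos : ∀ᵐ ξ ∂volume, 0 ≤ uhat ξ)
    (hu_def : ∀ x, u x = ∫ ξ, (uhat ξ : ℂ) * char x ξ)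
    (hu_ne : u ≠ 0)
    (E : Set (EuclideanSpace ℝ (Fin d)))
    (f : EuclideanSpace ℝ (Fin d) → EuclideanSpace ℝ (Fin d))
    (M : ℝ) (hbdd : BddCompOp uhat E f M) :
    ContinuousOn f E := by
  obtain rfl : u = hFun (fun ξ => (uhat ξ : ℂ)) := funext hu_def
  intro x₀ hx₀
  refine tendsto_nhds_of_forall_tendsto_comp_sub (continuous_hFun huhat_L1.ofReal)
    (tendsto_hFun_cocompact _) (hFun_ofReal_zero_ne_zero huhat_L1 huhat_pos hu_ne) fun y => ?_
  obtain ⟨g, hg, hg_eq, -⟩ :=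
    hbdd _ (memL2inv_ofReal_mul_char huhat_meas huhat_L1 huhat_pos (-y))
  have htranslate : ∀ x ∈ E, hFun g x = hFun (fun ξ => (uhat ξ : ℂ)) (f x - y) := fun x hx => by
    rw [hg_eq x hx, hFun_mul_char]
  have hcont : Tendsto (hFun g) (𝓝[E] x₀) (𝓝 (hFun g x₀)) :=
    (continuous_hFun (hg.integrable huhat_L1 huhat_pos)).continuousWithinAt
  rw [htranslate x₀ hx₀] at hcont
  exact hcont.congr' (eventually_nhdsWithin_of_forall htranslate)

/-- under the standing assumptions, if the composition operator `C_f`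
is everywhere defined with a bound, then `f` is continuous on `E`. -/
theorem statement7 {d : ℕ} (hd : 1 ≤ d)
    (uhat : EuclideanSpace ℝ (Fin d) → ℝ) (u : EuclideanSpace ℝ (Fin d) → ℂ)
    (huhat_meas : Measurable uhat) (huhat_L1 : Integrable uhat)
    (huhat_Linf : ∃ C : ℝ, ∀ᵐ ξ ∂volume, |uhat ξ| ≤ C)
    (huhat_pos : ∀ᵐ ξ ∂volume, 0 ≤ uhat ξ)
    (hu_def : ∀ x, u x = ∫ ξ, (uhat ξ : ℂ) * char x ξ)
    (hu_L2 : MemLp u 2) (hu_ne : u ≠ 0)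
    (E : Set (EuclideanSpace ℝ (Fin d)))
    (f : EuclideanSpace ℝ (Fin d) → EuclideanSpace ℝ (Fin d))
    (M : ℝ) (hM : 0 < M) (hbdd : BddCompOp uhat E f M) :
    ContinuousOn f E :=
  statement7_general uhat u huhat_meas huhat_L1 huhat_pos hu_def hu_ne E f M hbdd
end Paper
end
end

section
/- For every a ∈ ℝ, every n ∈ ℕ, and every complex polynomial P in one variable of degree ≤ n, ∫_ℝ |P(x+a)|² e^{−x²} dx ≤ (n+1) · 8ⁿ · e^{2a²} · ∫_ℝ |P(x)|² e^{−x²} dx. -/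
/-!
Taylor's formula and Cauchy–Schwarz give `|P(x+a)|² ≤ (n+1) ∑ₖ |P⁽ᵏ⁾(x)/k!|² a²ᵏ`, so everything
reduces to bounding the Gaussian norm `‖Q‖² = ∫ |Q|² e^{-x²}` of derivatives: `‖Q'‖² ≤ 2n ‖Q‖²`
when `deg Q ≤ n`. Integration by parts shows that the Hermite polynomial `Hₖ` satisfies
`∫ Hₖ q e^{-x²} = ∫ q⁽ᵏ⁾ e^{-x²}`, so `Hₖ` is orthogonal to lower degrees; together with
`Hₖ' = 2k Hₖ₋₁` and `‖Hₖ‖² = 2k ‖Hₖ₋₁‖²`, splitting off the top Hermite component of `Q` gives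
the derivative bound by induction on `n`. Iterating it, `‖P⁽ᵏ⁾/k!‖² ≤ 2ᵏ C(n,k)/k! ‖P‖²`, and
`∑ₖ C(n,k) (2a²)ᵏ/k! ≤ 2ⁿ e^{2a²}`.
-/

open MeasureTheory Polynomial
open scoped Real Nat

noncomputable section

namespace Paper

lemma integrable_eval_mul_exp_neg_sq (p : ℂ[X]) :
    Integrable fun x : ℝ => p.eval (x : ℂ) * Real.exp (-x ^ 2) := by
  have hpow (k : ℕ) : Integrable fun x : ℝ => ((x ^ k * Real.exp (-x ^ 2) : ℝ) : ℂ) := by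
    have h := integrable_rpow_mul_exp_neg_mul_sq one_pos (s := k)
      (by linarith [k.cast_nonneg (α := ℝ)])
    simpa [Real.rpow_natCast] using h.ofReal (𝕜 := ℂ)
  simp_rw [eval_eq_sum_range, Finset.sum_mul]
  refine integrable_finsetSum _ fun k _ => ?_
  simpa [mul_assoc] using (hpow k).const_mul (p.coeff k)

def gaussianFunctional : ℂ[X] →ₗ[ℂ] ℂ where
  toFun p := ∫ x : ℝ, p.eval (x : ℂ) * Real.exp (-x ^ 2)
  map_add' p q := by
    simp only [eval_add, add_mul]
    exact integral_add (integrable_eval_mul_exp_neg_sq p) (integrable_eval_mul_exp_neg_sq q)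
  map_smul' c p := by
    simp only [eval_smul, smul_eq_mul, mul_assoc, RingHom.id_apply]
    exact integral_const_mul c _

lemma gaussianFunctional_apply (p : ℂ[X]) :
    gaussianFunctional p = ∫ x : ℝ, p.eval (x : ℂ) * Real.exp (-x ^ 2) := rfl

lemma gaussianFunctional_derivative (p : ℂ[X]) :
    gaussianFunctional (derivative p) = gaussianFunctional (2 * X * p) := by
  have hderiv (x : ℝ) : HasDerivAt (fun y : ℝ => p.eval (y : ℂ) * Real.exp (-y ^ 2))
      ((derivative p - 2 * X * p).eval (x : ℂ) * Real.exp (-x ^ 2)) x := by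
    have hexp : HasDerivAt (fun y : ℝ => Real.exp (-y ^ 2)) (Real.exp (-x ^ 2) * -(2 * x)) x := by
      simpa using ((hasDerivAt_pow 2 x).neg).exp
    refine (((p.hasDerivAt (x : ℂ)).comp_ofReal).mul hexp.ofReal_comp).congr_deriv ?_
    simp
    ring
  have := integral_eq_zero_of_hasDerivAt_of_integrable hderiv
    (integrable_eval_mul_exp_neg_sq _) (integrable_eval_mul_exp_neg_sq p)
  rwa [← gaussianFunctional_apply, map_sub, sub_eq_zero] at this

lemma gaussianFunctional_C_mul (c : ℂ) (p : ℂ[X]) :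
    gaussianFunctional (C c * p) = c * gaussianFunctional p := by
  rw [← smul_eq_C_mul, map_smul, smul_eq_mul]

/-- The physicists' Hermite polynomials; `derivative_physHermite_succ` turns this recursion into
the usual `Hₖ₊₁ = 2X Hₖ - 2k Hₖ₋₁`. -/
def physHermite (R : Type*) [CommRing R] : ℕ → R[X]
  | 0 => 1
  | k + 1 => 2 * X * physHermite R k - derivative (physHermite R k)

section physHermite

variable {R : Type*} [CommRing R]

@[simp]
lemma physHermite_zero : physHermite R 0 = 1 := rfl

lemma physHermite_succ (k : ℕ) :
    physHermite R (k + 1) = 2 * X * physHermite R k - derivative (physHermite R k) := rfl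

lemma derivative_physHermite_succ (k : ℕ) :
    derivative (physHermite R (k + 1)) = 2 * (k + 1) * physHermite R k := by
  induction k with
  | zero => simp [physHermite_succ]
  | succ k ih =>
    rw [physHermite_succ (k + 1), derivative_sub, derivative_mul, ih, physHermite_succ k]
    simp only [derivative_mul, derivative_ofNat, derivative_X, derivative_add, derivative_one,
      derivative_natCast]
    push_cast
    ring

lemma natDegree_physHermite_le (k : ℕ) : (physHermite R k).natDegree ≤ k := by
  induction k with
  | zero => simp
  | succ k ih =>
    rw [physHermite_succ]
    have h2X : (2 * X : R[X]).natDegree ≤ 1 := by compute_degree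
    rw [natDegree_sub_le_iff_left
      ((natDegree_derivative_le _).trans ((Nat.sub_le _ _).trans (ih.trans k.le_succ)))]
    exact (natDegree_mul_le_of_le h2X ih).trans_eq (add_comm 1 k)

lemma coeff_physHermite_self (k : ℕ) : (physHermite R k).coeff k = 2 ^ k := by
  induction k with
  | zero => simp
  | succ k ih =>
    have htop : (physHermite R k).coeff (k + 2) = 0 :=
      coeff_eq_zero_of_natDegree_lt ((natDegree_physHermite_le k).trans_lt (by omega))
    rw [physHermite_succ, coeff_sub, coeff_derivative, htop, mul_assoc, ← C_ofNat, coeff_C_mul,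
      coeff_X_mul, ih]
    ring

lemma map_physHermite {S : Type*} [CommRing S] (f : R →+* S) (k : ℕ) :
    (physHermite R k).map f = physHermite S k := by
  induction k with
  | zero => simp
  | succ k ih => simp [physHermite_succ, ← ih]

end physHermite

lemma gaussianFunctional_physHermite_succ_mul (k : ℕ) (q : ℂ[X]) :
    gaussianFunctional (physHermite ℂ (k + 1) * q) =
      gaussianFunctional (physHermite ℂ k * derivative q) := by
  have hparts := gaussianFunctional_derivative (physHermite ℂ k * q)
  rw [derivative_mul, map_add] at hparts
  rw [physHermite_succ, sub_mul, map_sub, mul_assoc (2 * X), ← hparts]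
  ring

lemma gaussianFunctional_physHermite_mul (k : ℕ) (q : ℂ[X]) :
    gaussianFunctional (physHermite ℂ k * q) = gaussianFunctional (derivative^[k] q) := by
  induction k generalizing q with
  | zero => simp
  | succ k ih => rw [gaussianFunctional_physHermite_succ_mul, ih, Function.iterate_succ_apply]

lemma gaussianFunctional_physHermite_mul_eq_zero {k : ℕ} {q : ℂ[X]} (hq : q.degree < k) :
    gaussianFunctional (physHermite ℂ k * q) = 0 := by
  rw [gaussianFunctional_physHermite_mul, iterate_derivative_eq_zero_of_degree_lt hq, map_zero]

def gaussNormSq (Q : ℂ[X]) : ℝ := ∫ x : ℝ, ‖Q.eval (x : ℂ)‖ ^ 2 * Real.exp (-x ^ 2)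

lemma eval_map_conj_ofReal (Q : ℂ[X]) (x : ℝ) :
    (Q.map (starRingEnd ℂ)).eval (x : ℂ) = starRingEnd ℂ (Q.eval (x : ℂ)) := by
  rw [eval_map]
  simpa using eval₂_at_apply (p := Q) (starRingEnd ℂ) (x : ℂ)

lemma ofReal_gaussNormSq (Q : ℂ[X]) :
    (gaussNormSq Q : ℂ) = gaussianFunctional (Q * Q.map (starRingEnd ℂ)) := by
  rw [gaussNormSq, ← integral_complex_ofReal, gaussianFunctional_apply]
  refine integral_congr_ae (ae_of_all _ fun x => ?_)
  simp only [eval_mul, eval_map_conj_ofReal, Complex.mul_conj, Complex.normSq_eq_norm_sq]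
  push_cast
  ring

lemma integrable_norm_sq_eval_mul_exp_neg_sq (Q : ℂ[X]) :
    Integrable fun x : ℝ => ‖Q.eval (x : ℂ)‖ ^ 2 * Real.exp (-x ^ 2) := by
  refine (integrable_eval_mul_exp_neg_sq (Q * Q.map (starRingEnd ℂ))).norm.congr
    (ae_of_all _ fun x => ?_)
  dsimp only
  rw [norm_mul, eval_mul, norm_mul, eval_map_conj_ofReal, Complex.norm_conj, Complex.norm_real,
    Real.norm_of_nonneg (Real.exp_pos _).le, ← sq]

lemma gaussNormSq_nonneg (Q : ℂ[X]) : 0 ≤ gaussNormSq Q :=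
  integral_nonneg fun x => by positivity

lemma gaussNormSq_smul (c : ℂ) (Q : ℂ[X]) : gaussNormSq (c • Q) = ‖c‖ ^ 2 * gaussNormSq Q := by
  simp_rw [gaussNormSq, eval_smul, smul_eq_mul, norm_mul, mul_pow, mul_assoc]
  exact integral_const_mul _ _

lemma gaussNormSq_C_mul_physHermite_add (c : ℂ) {k : ℕ} {s : ℂ[X]} (hs : s.degree < k) :
    gaussNormSq (C c * physHermite ℂ k + s) =
      ‖c‖ ^ 2 * gaussNormSq (physHermite ℂ k) + gaussNormSq s := by
  have h1 := gaussianFunctional_physHermite_mul_eq_zero hs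
  have h2 : gaussianFunctional (physHermite ℂ k * s.map (starRingEnd ℂ)) = 0 :=
    gaussianFunctional_physHermite_mul_eq_zero (by rwa [degree_map])
  have hexpand : (C c * physHermite ℂ k + s) *
      (C (starRingEnd ℂ c) * physHermite ℂ k + s.map (starRingEnd ℂ)) =
      C (c * starRingEnd ℂ c) * (physHermite ℂ k * physHermite ℂ k) +
        C c * (physHermite ℂ k * s.map (starRingEnd ℂ)) +
        C (starRingEnd ℂ c) * (physHermite ℂ k * s) + s * s.map (starRingEnd ℂ) := by
    rw [map_mul]; ring
  apply Complex.ofReal_injective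
  push_cast
  rw [ofReal_gaussNormSq, ofReal_gaussNormSq, ofReal_gaussNormSq, Polynomial.map_add,
    Polynomial.map_mul, map_C, map_physHermite, hexpand, map_add, map_add, map_add,
    gaussianFunctional_C_mul, gaussianFunctional_C_mul, gaussianFunctional_C_mul, h1, h2,
    Complex.mul_conj, Complex.normSq_eq_norm_sq]
  push_cast
  ring

lemma gaussNormSq_physHermite_succ (k : ℕ) :
    gaussNormSq (physHermite ℂ (k + 1)) = 2 * (k + 1) * gaussNormSq (physHermite ℂ k) := by
  apply Complex.ofReal_injective
  push_cast
  have h2k : (2 * (k + 1) : ℂ[X]) = C (2 * (k + 1) : ℂ) := by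
    simp only [map_mul, map_add, map_one, map_natCast, C_ofNat]
  rw [ofReal_gaussNormSq, ofReal_gaussNormSq, map_physHermite, map_physHermite,
    gaussianFunctional_physHermite_succ_mul, derivative_physHermite_succ, mul_left_comm, h2k,
    gaussianFunctional_C_mul]

lemma exists_eq_C_mul_physHermite_add {n : ℕ} {Q : ℂ[X]} (hQ : Q.natDegree ≤ n + 1) :
    ∃ (b : ℂ) (r : ℂ[X]), r.natDegree ≤ n ∧ Q = C b * physHermite ℂ (n + 1) + r := by
  set b := Q.coeff (n + 1) / 2 ^ (n + 1)
  refine ⟨b, Q - C b * physHermite ℂ (n + 1), ?_, by ring⟩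
  rw [natDegree_le_iff_coeff_eq_zero]
  intro m hm
  rw [coeff_sub, coeff_C_mul]
  obtain rfl | hlt := (Nat.succ_le_of_lt hm).eq_or_lt
  · rw [coeff_physHermite_self, Nat.succ_eq_add_one, div_mul_cancel₀ _ (by norm_num), sub_self]
  · rw [coeff_eq_zero_of_natDegree_lt (hQ.trans_lt hlt),
      coeff_eq_zero_of_natDegree_lt ((natDegree_physHermite_le _).trans_lt hlt), mul_zero,
      sub_zero]

lemma gaussNormSq_derivative_le {n : ℕ} {Q : ℂ[X]} (hQ : Q.natDegree ≤ n) :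
    gaussNormSq (derivative Q) ≤ 2 * n * gaussNormSq Q := by
  induction n generalizing Q with
  | zero => simp [derivative_of_natDegree_zero (Nat.le_zero.mp hQ), gaussNormSq]
  | succ n ih =>
    obtain ⟨b, r, hr, rfl⟩ := exists_eq_C_mul_physHermite_add hQ
    have hr_deg : r.degree < ↑(n + 1) :=
      (degree_le_of_natDegree_le hr).trans_lt (by exact_mod_cast n.lt_succ_self)
    have hr'_deg : (derivative r).degree < n := by
      rcases eq_or_ne r 0 with rfl | hr0
      · simp
      · exact (degree_derivative_lt hr0).trans_le (degree_le_of_natDegree_le hr)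
    have hder : derivative (C b * physHermite ℂ (n + 1) + r) =
        C (b * (2 * (n + 1))) * physHermite ℂ n + derivative r := by
      rw [derivative_add, derivative_C_mul, derivative_physHermite_succ]
      simp only [map_mul, map_add, map_one, map_natCast, C_ofNat]
      ring
    have hnorm : ‖b * (2 * (n + 1))‖ ^ 2 = ‖b‖ ^ 2 * (2 * (n + 1)) ^ 2 := by
      rw [norm_mul, mul_pow]
      norm_cast
    rw [hder, gaussNormSq_C_mul_physHermite_add _ hr'_deg,
      gaussNormSq_C_mul_physHermite_add _ hr_deg, gaussNormSq_physHermite_succ, hnorm]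
    have := ih hr
    have := gaussNormSq_nonneg r
    push_cast
    nlinarith

lemma gaussNormSq_iterate_derivative_le {n : ℕ} {Q : ℂ[X]} (hQ : Q.natDegree ≤ n) (k : ℕ) :
    gaussNormSq (derivative^[k] Q) ≤ 2 ^ k * n.descFactorial k * gaussNormSq Q := by
  induction k with
  | zero => simp
  | succ k ih =>
    have hdeg : (derivative^[k] Q).natDegree ≤ n - k :=
      (natDegree_iterate_derivative Q k).trans (Nat.sub_le_sub_right hQ k)
    rw [Function.iterate_succ_apply', Nat.descFactorial_succ]
    calc gaussNormSq (derivative (derivative^[k] Q))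
        ≤ 2 * (n - k : ℕ) * gaussNormSq (derivative^[k] Q) := gaussNormSq_derivative_le hdeg
      _ ≤ 2 * (n - k : ℕ) * (2 ^ k * n.descFactorial k * gaussNormSq Q) := by gcongr
      _ = _ := by push_cast; ring

lemma gaussNormSq_hasseDeriv_le {n : ℕ} {Q : ℂ[X]} (hQ : Q.natDegree ≤ n) (k : ℕ) :
    gaussNormSq (hasseDeriv k Q) ≤ 2 ^ k * n.choose k / k ! * gaussNormSq Q := by
  have hfac : (k ! : ℂ) • hasseDeriv k Q = derivative^[k] Q := by
    rw [Nat.cast_smul_eq_nsmul, ← factorial_smul_hasseDeriv]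
    rfl
  have h := gaussNormSq_iterate_derivative_le hQ k
  rw [← hfac, gaussNormSq_smul, Nat.descFactorial_eq_factorial_mul_choose, Complex.norm_natCast]
    at h
  have hpos : (0 : ℝ) < k ! := by positivity
  rw [div_mul_eq_mul_div, le_div_iff₀ hpos]
  refine le_of_mul_le_mul_left ?_ hpos
  push_cast at h
  linarith

lemma eval_add_eq_sum_hasseDeriv {R : Type*} [CommRing R] {n : ℕ} {P : R[X]}
    (hP : P.natDegree ≤ n) (x a : R) :
    P.eval (x + a) = ∑ k ∈ Finset.range (n + 1), (hasseDeriv k P).eval x * a ^ k := by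
  rw [add_comm, ← taylor_eval,
    eval_eq_sum_range' (n := n + 1) (by rw [natDegree_taylor]; omega)]
  simp only [taylor_coeff]

lemma norm_sq_eval_add_le {𝕜 : Type*} [NormedField 𝕜] {n : ℕ} {P : 𝕜[X]}
    (hP : P.natDegree ≤ n) (x a : 𝕜) :
    ‖P.eval (x + a)‖ ^ 2 ≤
      (n + 1) * ∑ k ∈ Finset.range (n + 1), ‖(hasseDeriv k P).eval x‖ ^ 2 * (‖a‖ ^ 2) ^ k := by
  rw [eval_add_eq_sum_hasseDeriv hP]
  calc ‖∑ k ∈ Finset.range (n + 1), (hasseDeriv k P).eval x * a ^ k‖ ^ 2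
      ≤ (∑ k ∈ Finset.range (n + 1), ‖(hasseDeriv k P).eval x * a ^ k‖) ^ 2 := by
        gcongr
        exact norm_sum_le _ _
    _ ≤ (n + 1) * ∑ k ∈ Finset.range (n + 1), ‖(hasseDeriv k P).eval x * a ^ k‖ ^ 2 := by
        simpa using sq_sum_le_card_mul_sum_sq (s := Finset.range (n + 1))
          (f := fun k => ‖(hasseDeriv k P).eval x * a ^ k‖)
    _ = _ := by
        refine congrArg _ (Finset.sum_congr rfl fun k _ => ?_)
        rw [norm_mul, norm_pow, mul_pow, pow_right_comm]

lemma integral_norm_sq_eval_add_mul_exp_neg_sq_le {n : ℕ} {P : ℂ[X]} (hP : P.natDegree ≤ n)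
    (a : ℝ) :
    ∫ x : ℝ, ‖P.eval ((x + a : ℝ) : ℂ)‖ ^ 2 * Real.exp (-x ^ 2) ≤
      (n + 1) * ∑ k ∈ Finset.range (n + 1), (a ^ 2) ^ k * gaussNormSq (hasseDeriv k P) := by
  have hint (k : ℕ) (c : ℝ) :=
    (integrable_norm_sq_eval_mul_exp_neg_sq (hasseDeriv k P)).const_mul c
  have hbound (x : ℝ) : ‖P.eval ((x + a : ℝ) : ℂ)‖ ^ 2 * Real.exp (-x ^ 2) ≤
      ∑ k ∈ Finset.range (n + 1), (n + 1) * (a ^ 2) ^ k *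
        (‖(hasseDeriv k P).eval (x : ℂ)‖ ^ 2 * Real.exp (-x ^ 2)) := by
    have h := norm_sq_eval_add_le hP (x : ℂ) (a : ℂ)
    rw [← Complex.ofReal_add, Complex.norm_real, Real.norm_eq_abs, sq_abs] at h
    calc _ ≤ (n + 1) * (∑ k ∈ Finset.range (n + 1),
          ‖(hasseDeriv k P).eval (x : ℂ)‖ ^ 2 * (a ^ 2) ^ k) * Real.exp (-x ^ 2) := by gcongr
      _ = _ := by
        rw [Finset.mul_sum, Finset.sum_mul]
        exact Finset.sum_congr rfl fun k _ => by ring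
  calc _ ≤ ∫ x : ℝ, ∑ k ∈ Finset.range (n + 1), (n + 1) * (a ^ 2) ^ k *
        (‖(hasseDeriv k P).eval (x : ℂ)‖ ^ 2 * Real.exp (-x ^ 2)) :=
        integral_mono_of_nonneg (ae_of_all _ fun x => by positivity)
          (integrable_finsetSum _ fun k _ => hint k _) (ae_of_all _ hbound)
    _ = _ := by
        rw [integral_finsetSum _ fun k _ => hint k _, Finset.mul_sum]
        refine Finset.sum_congr rfl fun k _ => ?_
        rw [integral_const_mul, gaussNormSq, mul_assoc]

lemma sum_choose_mul_pow_div_factorial_le (n : ℕ) {y : ℝ} (hy : 0 ≤ y) :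
    ∑ k ∈ Finset.range (n + 1), n.choose k * (y ^ k / k !) ≤ 2 ^ n * Real.exp y := by
  calc _ ≤ ∑ k ∈ Finset.range (n + 1), 2 ^ n * (y ^ k / k !) :=
        Finset.sum_le_sum fun k _ => by gcongr; exact_mod_cast Nat.choose_le_two_pow n k
    _ ≤ 2 ^ n * Real.exp y := by
        rw [← Finset.mul_sum]
        gcongr
        exact Real.sum_le_exp_of_nonneg hy _

lemma sum_sq_pow_mul_gaussNormSq_hasseDeriv_le {n : ℕ} {P : ℂ[X]} (hP : P.natDegree ≤ n)
    (a : ℝ) :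
    ∑ k ∈ Finset.range (n + 1), (a ^ 2) ^ k * gaussNormSq (hasseDeriv k P) ≤
      2 ^ n * Real.exp (2 * a ^ 2) * gaussNormSq P := by
  calc _ ≤ ∑ k ∈ Finset.range (n + 1), n.choose k * ((2 * a ^ 2) ^ k / k !) * gaussNormSq P :=
        Finset.sum_le_sum fun k _ => by
          grw [gaussNormSq_hasseDeriv_le hP k]
          exact le_of_eq (by ring)
    _ ≤ 2 ^ n * Real.exp (2 * a ^ 2) * gaussNormSq P := by
        rw [← Finset.sum_mul]
        gcongr
        · exact gaussNormSq_nonneg P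
        · exact sum_choose_mul_pow_div_factorial_le n (by positivity)

/-- for a complex polynomial `P` of degree at most `n`,
`∫ |P(x+a)|² e^{−x²} dx ≤ (n+1) 8ⁿ e^{2a²} ∫ |P(x)|² e^{−x²} dx`. -/
theorem statement16 (a : ℝ) (n : ℕ) (P : Polynomial ℂ) (hP : P.degree ≤ n) :
    ∫ x : ℝ, ‖P.eval ((x + a : ℝ) : ℂ)‖ ^ 2 * Real.exp (-x ^ 2) ≤
      (n + 1) * 8 ^ n * Real.exp (2 * a ^ 2) *
        ∫ x : ℝ, ‖P.eval ((x : ℝ) : ℂ)‖ ^ 2 * Real.exp (-x ^ 2) := by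
  have hPn : P.natDegree ≤ n := natDegree_le_iff_degree_le.mpr hP
  calc _ ≤ (n + 1) * ∑ k ∈ Finset.range (n + 1), (a ^ 2) ^ k * gaussNormSq (hasseDeriv k P) :=
        integral_norm_sq_eval_add_mul_exp_neg_sq_le hPn a
    _ ≤ (n + 1) * (2 ^ n * Real.exp (2 * a ^ 2) * gaussNormSq P) := by
        gcongr
        exact sum_sq_pow_mul_gaussNormSq_hasseDeriv_le hPn a
    _ ≤ (n + 1) * 8 ^ n * Real.exp (2 * a ^ 2) * gaussNormSq P := by
        rw [← mul_assoc, ← mul_assoc]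
        have := gaussNormSq_nonneg P
        gcongr
        norm_num

end Paper
end
end
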